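/- Suppose P ∈ ℂ^{n×n} is a Hermitian positive definite solution of the anti-Riccati equation −Q = A₂^H P^# A₂ − A₂^H P^# B₂ (R + B₂^H P^# B₂)^{-1} B₂^H P^# A₂ − P, and set K₁* = −(R + B₂^H P^# B₂)^{-1} B₂^H P^# A₂. Then: (i) every solution of the closed-loop system x(k+1) = (A₂ + B₂K₁*)^# x^#(k) converges to 0; (ii) for every initial condition x₀ and every control sequence u, J(u) ≥ x₀^H P x₀, and the feedback control u(k) = K₁* x(k) achieves J(u) = x₀^H P x₀. -/

import Mathlib

open Matrix Filter Topology
open scoped ENNReal ComplexOrder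

noncomputable section

/-- Entrywise complex conjugate of a matrix, `M^#`. -/
def mconj {k l : Type*} (A : Matrix k l ℂ) : Matrix k l ℂ := A.map (starRingEnd ℂ)

variable {n m : ℕ}

/-- The antilinear system `x(k+1) = A₂^# x^#(k) + B₂^# u^#(k)` is stabilizable if some
feedback `u(k) = K₁x(k) + K₂^#x^#(k)` drives every closed-loop solution to zero. -/
def AntiStabilizable (A₂ : Matrix (Fin n) (Fin n) ℂ) (B₂ : Matrix (Fin n) (Fin m) ℂ) :
    Prop :=
  ∃ K₁ K₂ : Matrix (Fin m) (Fin n) ℂ, ∀ x : ℕ → (Fin n → ℂ),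
    (∀ k : ℕ, x (k + 1) =
        mconj A₂ *ᵥ star (x k) + mconj B₂ *ᵥ star (K₁ *ᵥ x k + mconj K₂ *ᵥ star (x k))) →
    Tendsto x atTop (𝓝 0)

/-- The trajectory of the antilinear system `x(k+1) = A₂^# x^#(k) + B₂^# u^#(k)` from
the initial condition `x₀` under the control sequence `u`. -/
def atraj (A₂ : Matrix (Fin n) (Fin n) ℂ) (B₂ : Matrix (Fin n) (Fin m) ℂ)
    (x₀ : Fin n → ℂ) (u : ℕ → Fin m → ℂ) : ℕ → Fin n → ℂ
  | 0 => x₀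
  | k + 1 => mconj A₂ *ᵥ star (atraj A₂ B₂ x₀ u k) + mconj B₂ *ᵥ star (u k)

/-- The quadratic cost `J = Σ_k (x(k)^H Q x(k) + u(k)^H R u(k))`, valued in `[0,∞]`. -/
def cost (Q : Matrix (Fin n) (Fin n) ℂ) (R : Matrix (Fin m) (Fin m) ℂ)
    (x : ℕ → Fin n → ℂ) (u : ℕ → Fin m → ℂ) : ℝ≥0∞ :=
  ∑' k : ℕ, ENNReal.ofReal ((star (x k) ⬝ᵥ (Q *ᵥ x k)).re + (star (u k) ⬝ᵥ (R *ᵥ u k)).re)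

/-- The LQR problem for the antilinear system is solvable: for every initial condition
there is a control of finite cost minimizing the cost. -/
def LQRSolvable (A₂ : Matrix (Fin n) (Fin n) ℂ) (B₂ : Matrix (Fin n) (Fin m) ℂ)
    (Q : Matrix (Fin n) (Fin n) ℂ) (R : Matrix (Fin m) (Fin m) ℂ) : Prop :=
  ∀ x₀ : Fin n → ℂ, ∃ u : ℕ → Fin m → ℂ,
    cost Q R (atraj A₂ B₂ x₀ u) u < ⊤ ∧
    ∀ u' : ℕ → Fin m → ℂ, cost Q R (atraj A₂ B₂ x₀ u) u ≤ cost Q R (atraj A₂ B₂ x₀ u') u'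

/-- The anti-Riccati equation
`-Q = A₂^H P^# A₂ - A₂^H P^# B₂ (R + B₂^H P^# B₂)⁻¹ B₂^H P^# A₂ - P`. -/
def AntiRiccati (A₂ : Matrix (Fin n) (Fin n) ℂ) (B₂ : Matrix (Fin n) (Fin m) ℂ)
    (Q : Matrix (Fin n) (Fin n) ℂ) (R : Matrix (Fin m) (Fin m) ℂ)
    (P : Matrix (Fin n) (Fin n) ℂ) : Prop :=
  -Q = A₂ᴴ * mconj P * A₂ -
      A₂ᴴ * mconj P * B₂ * (R + B₂ᴴ * mconj P * B₂)⁻¹ * (B₂ᴴ * mconj P * A₂) - P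


/-!
With `N = P^#` and `S = R + B₂ᴴ N B₂`, the anti-Riccati equation is exactly what is needed to
complete the square: for every state `x` and input `u`,
`xᴴQx + uᴴRu + (A₂x + B₂u)ᴴ N (A₂x + B₂u) = xᴴPx + (u - Kx)ᴴ S (u - Kx)`.
The next state of the antilinear system is `x⁺ = (A₂x + B₂u)^#`, and `x⁺ᴴ P x⁺` is the complex
conjugate of `(A₂x + B₂u)ᴴ N (A₂x + B₂u)`, so the stage cost equals
`xᴴPx - x⁺ᴴPx⁺ + (u - Kx)ᴴ S (u - Kx)` with `S > 0`. Summing, the cost telescopes: any control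
of finite cost drives the state to `0` (as `Q > 0`) and so costs at least `x₀ᴴPx₀`, while the
feedback `u = Kx` kills the square and costs at most `x₀ᴴPx₀`. In particular the closed loop has
finite cost, hence is stable.
-/

section CompleteSquare

variable {𝕜 ι κ μ : Type*} [Field 𝕜] [StarRing 𝕜] [Fintype ι] [Fintype κ] [Fintype μ]

theorem star_mulVec_dotProduct (C : Matrix ι κ 𝕜) (M : Matrix ι μ 𝕜) (v : κ → 𝕜) (w : μ → 𝕜) :
    star (C *ᵥ v) ⬝ᵥ (M *ᵥ w) = star v ⬝ᵥ ((Cᴴ * M) *ᵥ w) := by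
  rw [star_mulVec, dotProduct_mulVec, vecMul_vecMul, ← dotProduct_mulVec]

theorem quadForm_add_eq_completedSquare (A : Matrix ι ι 𝕜) (B : Matrix ι κ 𝕜)
    (Q P N : Matrix ι ι 𝕜) (R S : Matrix κ κ 𝕜) (K : Matrix κ ι 𝕜)
    (hAA : Q + Aᴴ * (N * A) - P = Kᴴ * (S * K)) (hAB : Aᴴ * (N * B) = -(Kᴴ * S))
    (hBA : Bᴴ * (N * A) = -(S * K)) (hBB : R + Bᴴ * (N * B) = S) (x : ι → 𝕜) (u : κ → 𝕜) :
    star x ⬝ᵥ (Q *ᵥ x) + star u ⬝ᵥ (R *ᵥ u) +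
        star (A *ᵥ x + B *ᵥ u) ⬝ᵥ (N *ᵥ (A *ᵥ x + B *ᵥ u)) =
      star x ⬝ᵥ (P *ᵥ x) + star (u - K *ᵥ x) ⬝ᵥ (S *ᵥ (u - K *ᵥ x)) := by
  have eAA := congrArg (fun M => star x ⬝ᵥ (M *ᵥ x)) hAA
  have eAB := congrArg (fun M => star x ⬝ᵥ (M *ᵥ u)) hAB
  have eBA := congrArg (fun M => star u ⬝ᵥ (M *ᵥ x)) hBA
  have eBB := congrArg (fun M => star u ⬝ᵥ (M *ᵥ u)) hBB
  simp only [add_mulVec, sub_mulVec, neg_mulVec, dotProduct_add, dotProduct_sub,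
    dotProduct_neg] at eAA eAB eBA eBB
  simp only [star_add, star_sub, mulVec_add, mulVec_sub, add_dotProduct, sub_dotProduct,
    dotProduct_add, dotProduct_sub, mulVec_mulVec, star_mulVec_dotProduct]
  linear_combination eAA + eAB + eBA + eBB

variable [DecidableEq κ]

theorem riccati_quadForm_add_eq_completedSquare {A : Matrix ι ι 𝕜} {B : Matrix ι κ 𝕜}
    {Q P N : Matrix ι ι 𝕜} {R : Matrix κ κ 𝕜} (hR : R.IsHermitian) (hN : N.IsHermitian)
    (hS : IsUnit (R + Bᴴ * N * B))
    (hRic : -Q = Aᴴ * N * A - Aᴴ * N * B * (R + Bᴴ * N * B)⁻¹ * (Bᴴ * N * A) - P)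
    {K : Matrix κ ι 𝕜} (hK : K = -((R + Bᴴ * N * B)⁻¹ * (Bᴴ * N * A)))
    (x : ι → 𝕜) (u : κ → 𝕜) :
    star x ⬝ᵥ (Q *ᵥ x) + star u ⬝ᵥ (R *ᵥ u) +
        star (A *ᵥ x + B *ᵥ u) ⬝ᵥ (N *ᵥ (A *ᵥ x + B *ᵥ u)) =
      star x ⬝ᵥ (P *ᵥ x) + star (u - K *ᵥ x) ⬝ᵥ
        ((R + Bᴴ * N * B) *ᵥ (u - K *ᵥ x)) := by
  set S := R + Bᴴ * N * B with hSdef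
  rw [isUnit_iff_isUnit_det] at hS
  have hSH : S⁻¹ᴴ = S⁻¹ := by
    rw [conjTranspose_nonsing_inv, hSdef, conjTranspose_add, conjTranspose_mul,
      conjTranspose_mul, hR.eq, hN.eq, conjTranspose_conjTranspose, Matrix.mul_assoc]
  have hSiS : S⁻¹ * S = 1 := nonsing_inv_mul S hS
  have hSSi (M : Matrix κ ι 𝕜) : S * (S⁻¹ * M) = M := mul_nonsing_inv_cancel_left S M hS
  apply quadForm_add_eq_completedSquare (K := K)
  case hAA =>
    rw [hK, neg_eq_iff_eq_neg.mp hRic]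
    simp only [conjTranspose_neg, conjTranspose_mul, hSH, hN.eq, conjTranspose_conjTranspose,
      Matrix.neg_mul, Matrix.mul_neg, neg_neg, Matrix.mul_assoc, hSSi]
    abel
  case hAB =>
    simp only [hK, conjTranspose_neg, conjTranspose_mul, hSH, hN.eq, conjTranspose_conjTranspose,
      Matrix.neg_mul, neg_neg, Matrix.mul_assoc, hSiS, Matrix.mul_one]
  case hBA => simp only [hK, Matrix.mul_neg, neg_neg, hSSi, Matrix.mul_assoc]
  case hBB => rw [hSdef, Matrix.mul_assoc]

end CompleteSquare

theorem continuous_re_dotProduct_mulVec {ι : Type*} [Fintype ι] (Q : Matrix ι ι ℂ) :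
    Continuous fun x : ι → ℂ => (star x ⬝ᵥ (Q *ᵥ x)).re := by
  simp only [dotProduct, mulVec]
  fun_prop

theorem Matrix.PosDef.exists_pos_mul_norm_sq_le {ι : Type*} [Fintype ι] {Q : Matrix ι ι ℂ}
    (hQ : Q.PosDef) : ∃ ε > 0, ∀ x : ι → ℂ, ε * ‖x‖ ^ 2 ≤ (star x ⬝ᵥ (Q *ᵥ x)).re := by
  obtain ⟨ε, hε, hmin⟩ := (isCompact_sphere (0 : ι → ℂ) 1).exists_forall_le'
    (continuous_re_dotProduct_mulVec Q).continuousOn fun y hy => by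
      simpa using hQ.re_dotProduct_pos (ne_zero_of_mem_unit_sphere ⟨y, hy⟩)
  refine ⟨ε, hε, fun x => ?_⟩
  rcases eq_or_ne x 0 with rfl | hx
  · simp
  have hy : ((‖x‖ : ℂ)⁻¹ • x) ∈ Metric.sphere (0 : ι → ℂ) 1 := by
    simp [norm_smul, hx]
  calc ε * ‖x‖ ^ 2 ≤ (star ((‖x‖ : ℂ)⁻¹ • x) ⬝ᵥ (Q *ᵥ ((‖x‖ : ℂ)⁻¹ • x))).re * ‖x‖ ^ 2 :=
        by gcongr; exact hmin _ hy
    _ = (star x ⬝ᵥ (Q *ᵥ x)).re := by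
        simp only [star_smul, mulVec_smul, smul_dotProduct, dotProduct_smul, smul_eq_mul]
        rw [← Complex.ofReal_inv, Complex.star_def, Complex.conj_ofReal, ← mul_assoc,
          ← Complex.ofReal_mul, Complex.re_ofReal_mul]
        field_simp

theorem Matrix.PosDef.tendsto_zero_of_tendsto_re_dotProduct {ι α : Type*} [Fintype ι]
    {Q : Matrix ι ι ℂ} (hQ : Q.PosDef) {l : Filter α} {x : α → ι → ℂ}
    (h : Tendsto (fun a => (star (x a) ⬝ᵥ (Q *ᵥ x a)).re) l (𝓝 0)) : Tendsto x l (𝓝 0) := by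
  obtain ⟨ε, hε, hle⟩ := hQ.exists_pos_mul_norm_sq_le
  have hsq : Tendsto (fun a => ‖x a‖ ^ 2) l (𝓝 0) := by
    refine squeeze_zero (fun a => sq_nonneg _) (fun a => ?_) (by simpa using h.div_const ε)
    rw [le_div_iff₀' hε]
    exact hle (x a)
  have := hsq.sqrt
  simp only [Real.sqrt_sq (norm_nonneg _), Real.sqrt_zero] at this
  exact tendsto_zero_iff_norm_tendsto_zero.mpr this

theorem le_tsum_of_sub_succ_le {c V : ℕ → ℝ} (hc : Summable c) (hV : Tendsto V atTop (𝓝 0))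
    (h : ∀ k, V k - V (k + 1) ≤ c k) : V 0 ≤ ∑' k, c k := by
  have hpartial : ∀ N, V 0 - V N ≤ ∑ k ∈ Finset.range N, c k := fun N => by
    rw [← Finset.sum_range_sub']
    exact Finset.sum_le_sum fun k _ => h k
  simpa using le_of_tendsto_of_tendsto' (tendsto_const_nhds.sub hV) hc.hasSum.tendsto_sum_nat
    hpartial

theorem tsum_ofReal_le_of_eq_sub_succ {c V : ℕ → ℝ} (hc : ∀ k, 0 ≤ c k) (hV : ∀ k, 0 ≤ V k)
    (h : ∀ k, c k = V k - V (k + 1)) :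
    ∑' k, ENNReal.ofReal (c k) ≤ ENNReal.ofReal (V 0) := by
  rw [ENNReal.tsum_eq_iSup_nat]
  refine iSup_le fun N => ?_
  rw [← ENNReal.ofReal_sum_of_nonneg fun k _ => hc k, Finset.sum_congr rfl fun k _ => h k,
    Finset.sum_range_sub']
  exact ENNReal.ofReal_le_ofReal (sub_le_self _ (hV N))

section Conjugation

variable {ι κ : Type*}

theorem mconj_mulVec_star [Fintype κ] (M : Matrix ι κ ℂ) (v : κ → ℂ) :
    mconj M *ᵥ star v = star (M *ᵥ v) := by
  ext i
  simp [mconj, mulVec, dotProduct, star_sum]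

theorem re_dotProduct_mconj_mulVec [Fintype κ] (M : Matrix κ κ ℂ) (y : κ → ℂ) :
    (star y ⬝ᵥ (mconj M *ᵥ y)).re = (star (star y) ⬝ᵥ (M *ᵥ star y)).re := by
  conv_lhs => rw [← star_star y, mconj_mulVec_star, star_dotProduct_star, dotProduct_comm]
  exact Complex.conj_re _

theorem mconj_eq_transpose {M : Matrix κ κ ℂ} (hM : M.IsHermitian) : mconj M = Mᵀ := by
  ext i j
  simpa [mconj] using congrFun (congrFun hM.eq j) i

theorem posDef_mconj [Fintype κ] {M : Matrix κ κ ℂ} (hM : M.PosDef) :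
    (mconj M).PosDef :=
  mconj_eq_transpose hM.isHermitian ▸ hM.transpose

theorem posDef_add_conjTranspose_mul_mconj_mul [Fintype ι] [Fintype κ]
    {R : Matrix κ κ ℂ} {P : Matrix ι ι ℂ} (hR : R.PosDef) (hP : P.PosDef) (B : Matrix ι κ ℂ) :
    (R + Bᴴ * mconj P * B).PosDef :=
  hR.add_posSemidef ((posDef_mconj hP).posSemidef.conjTranspose_mul_mul_same B)

end Conjugation

def stageCost {ι κ : Type*} [Fintype ι] [Fintype κ] (Q : Matrix ι ι ℂ) (R : Matrix κ κ ℂ)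
    (x : ι → ℂ) (u : κ → ℂ) : ℝ :=
  (star x ⬝ᵥ (Q *ᵥ x)).re + (star u ⬝ᵥ (R *ᵥ u)).re

theorem cost_eq_tsum_stageCost (Q : Matrix (Fin n) (Fin n) ℂ) (R : Matrix (Fin m) (Fin m) ℂ)
    (x : ℕ → Fin n → ℂ) (u : ℕ → Fin m → ℂ) :
    cost Q R x u = ∑' k, ENNReal.ofReal (stageCost Q R (x k) (u k)) := rfl

theorem stageCost_nonneg {ι κ : Type*} [Fintype ι] [Fintype κ] {Q : Matrix ι ι ℂ}
    {R : Matrix κ κ ℂ} (hQ : Q.PosSemidef) (hR : R.PosSemidef) (x : ι → ℂ) (u : κ → ℂ) :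
    0 ≤ stageCost Q R x u :=
  add_nonneg (hQ.re_dotProduct_nonneg x) (hR.re_dotProduct_nonneg u)

theorem summable_stageCost_of_cost_ne_top {Q : Matrix (Fin n) (Fin n) ℂ}
    {R : Matrix (Fin m) (Fin m) ℂ} (hQ : Q.PosSemidef) (hR : R.PosSemidef)
    {x : ℕ → Fin n → ℂ} {u : ℕ → Fin m → ℂ} (h : cost Q R x u ≠ ⊤) :
    Summable fun k => stageCost Q R (x k) (u k) :=
  (ENNReal.summable_toReal h).congr fun _ => ENNReal.toReal_ofReal (stageCost_nonneg hQ hR _ _)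

theorem tendsto_zero_of_cost_ne_top {Q : Matrix (Fin n) (Fin n) ℂ}
    {R : Matrix (Fin m) (Fin m) ℂ} (hQ : Q.PosDef) (hR : R.PosSemidef)
    {x : ℕ → Fin n → ℂ} {u : ℕ → Fin m → ℂ} (h : cost Q R x u ≠ ⊤) :
    Tendsto x atTop (𝓝 0) := by
  refine hQ.tendsto_zero_of_tendsto_re_dotProduct (squeeze_zero (fun k => ?_) (fun k => ?_)
    (summable_stageCost_of_cost_ne_top hQ.posSemidef hR h).tendsto_atTop_zero)
  · exact hQ.posSemidef.re_dotProduct_nonneg (x k)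
  · exact le_add_of_nonneg_right (hR.re_dotProduct_nonneg (u k))

theorem atraj_succ (A₂ : Matrix (Fin n) (Fin n) ℂ) (B₂ : Matrix (Fin n) (Fin m) ℂ)
    (x₀ : Fin n → ℂ) (u : ℕ → Fin m → ℂ) (k : ℕ) :
    atraj A₂ B₂ x₀ u (k + 1) = star (A₂ *ᵥ atraj A₂ B₂ x₀ u k + B₂ *ᵥ u k) := by
  rw [atraj, mconj_mulVec_star, mconj_mulVec_star, star_add]

theorem eq_atraj_of_closedLoop (A₂ : Matrix (Fin n) (Fin n) ℂ) (B₂ : Matrix (Fin n) (Fin m) ℂ)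
    (K : Matrix (Fin m) (Fin n) ℂ) {x : ℕ → Fin n → ℂ}
    (hx : ∀ k, x (k + 1) = mconj (A₂ + B₂ * K) *ᵥ star (x k)) (k : ℕ) :
    x k = atraj A₂ B₂ (x 0) (fun j => K *ᵥ x j) k := by
  induction k with
  | zero => rfl
  | succ k ih =>
    rw [atraj_succ, ← ih, hx, mconj_mulVec_star, add_mulVec, mulVec_mulVec]

section AntiRiccati

variable {A₂ : Matrix (Fin n) (Fin n) ℂ} {B₂ : Matrix (Fin n) (Fin m) ℂ}
  {Q : Matrix (Fin n) (Fin n) ℂ} {R : Matrix (Fin m) (Fin m) ℂ} {P : Matrix (Fin n) (Fin n) ℂ}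
  {K : Matrix (Fin m) (Fin n) ℂ}

theorem AntiRiccati.stageCost_atraj_eq (hR : R.PosDef) (hP : P.PosDef)
    (heq : AntiRiccati A₂ B₂ Q R P)
    (hK : K = -((R + B₂ᴴ * mconj P * B₂)⁻¹ * (B₂ᴴ * mconj P * A₂)))
    (x₀ : Fin n → ℂ) (u : ℕ → Fin m → ℂ) (k : ℕ) :
    stageCost Q R (atraj A₂ B₂ x₀ u k) (u k) =
      (star (atraj A₂ B₂ x₀ u k) ⬝ᵥ (P *ᵥ atraj A₂ B₂ x₀ u k)).re -
        (star (atraj A₂ B₂ x₀ u (k + 1)) ⬝ᵥ (P *ᵥ atraj A₂ B₂ x₀ u (k + 1))).re +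
        (star (u k - K *ᵥ atraj A₂ B₂ x₀ u k) ⬝ᵥ
          ((R + B₂ᴴ * mconj P * B₂) *ᵥ (u k - K *ᵥ atraj A₂ B₂ x₀ u k))).re := by
  have key := congrArg Complex.re <| riccati_quadForm_add_eq_completedSquare hR.isHermitian
    (posDef_mconj hP).isHermitian (posDef_add_conjTranspose_mul_mconj_mul hR hP B₂).isUnit heq hK
    (atraj A₂ B₂ x₀ u k) (u k)
  rw [atraj_succ, ← re_dotProduct_mconj_mulVec]
  simp only [Complex.add_re] at key
  unfold stageCost
  linarith

theorem AntiRiccati.ofReal_le_cost (hQ : Q.PosDef) (hR : R.PosDef) (hP : P.PosDef)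
    (heq : AntiRiccati A₂ B₂ Q R P)
    (hK : K = -((R + B₂ᴴ * mconj P * B₂)⁻¹ * (B₂ᴴ * mconj P * A₂)))
    (x₀ : Fin n → ℂ) (u : ℕ → Fin m → ℂ) :
    ENNReal.ofReal (star x₀ ⬝ᵥ (P *ᵥ x₀)).re ≤ cost Q R (atraj A₂ B₂ x₀ u) u := by
  set x := atraj A₂ B₂ x₀ u
  by_cases htop : cost Q R x u = ⊤
  · exact htop ▸ le_top
  have hsum := summable_stageCost_of_cost_ne_top hQ.posSemidef hR.posSemidef htop
  have hV : Tendsto (fun k => (star (x k) ⬝ᵥ (P *ᵥ x k)).re) atTop (𝓝 0) := by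
    simpa [Function.comp_def] using ((continuous_re_dotProduct_mulVec P).tendsto 0).comp
      (tendsto_zero_of_cost_ne_top hQ hR.posSemidef htop)
  have hdiss : ∀ k, (star (x k) ⬝ᵥ (P *ᵥ x k)).re - (star (x (k + 1)) ⬝ᵥ (P *ᵥ x (k + 1))).re ≤
      stageCost Q R (x k) (u k) := fun k => by
    rw [heq.stageCost_atraj_eq hR hP hK]
    exact le_add_of_nonneg_right
      ((posDef_add_conjTranspose_mul_mconj_mul hR hP B₂).posSemidef.re_dotProduct_nonneg _)
  rw [cost_eq_tsum_stageCost, ← ENNReal.ofReal_tsum_of_nonneg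
    (fun _ => stageCost_nonneg hQ.posSemidef hR.posSemidef _ _) hsum]
  exact ENNReal.ofReal_le_ofReal (le_tsum_of_sub_succ_le hsum hV hdiss)

theorem AntiRiccati.cost_le_of_feedback (hQ : Q.PosSemidef) (hR : R.PosDef) (hP : P.PosDef)
    (heq : AntiRiccati A₂ B₂ Q R P)
    (hK : K = -((R + B₂ᴴ * mconj P * B₂)⁻¹ * (B₂ᴴ * mconj P * A₂)))
    (x₀ : Fin n → ℂ) (u : ℕ → Fin m → ℂ) (hu : ∀ k, u k = K *ᵥ atraj A₂ B₂ x₀ u k) :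
    cost Q R (atraj A₂ B₂ x₀ u) u ≤ ENNReal.ofReal (star x₀ ⬝ᵥ (P *ᵥ x₀)).re := by
  rw [cost_eq_tsum_stageCost]
  refine tsum_ofReal_le_of_eq_sub_succ
    (V := fun k => (star (atraj A₂ B₂ x₀ u k) ⬝ᵥ (P *ᵥ atraj A₂ B₂ x₀ u k)).re)
    (fun _ => stageCost_nonneg hQ hR.posSemidef _ _)
    (fun _ => hP.posSemidef.re_dotProduct_nonneg _) fun k => ?_
  rw [heq.stageCost_atraj_eq hR hP hK, ← hu k, sub_self, mulVec_zero, dotProduct_zero,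
    Complex.zero_re, add_zero]

end AntiRiccati

/-- If `P > 0` solves the anti-Riccati equation and
`K₁* = -(R + B₂^H P^# B₂)⁻¹ B₂^H P^# A₂`, then the closed-loop system
`x(k+1) = (A₂ + B₂K₁*)^# x^#(k)` is asymptotically stable, every control has cost at
least `x₀^H P x₀`, and the feedback `u(k) = K₁* x(k)` attains this cost. -/
theorem antiRiccati_posDef_optimal
    (A₂ : Matrix (Fin n) (Fin n) ℂ) (B₂ : Matrix (Fin n) (Fin m) ℂ)
    (Q : Matrix (Fin n) (Fin n) ℂ) (R : Matrix (Fin m) (Fin m) ℂ)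
    (hQ : Q.PosDef) (hR : R.PosDef)
    (P : Matrix (Fin n) (Fin n) ℂ) (hP : P.PosDef) (heq : AntiRiccati A₂ B₂ Q R P)
    (K : Matrix (Fin m) (Fin n) ℂ)
    (hK : K = -((R + B₂ᴴ * mconj P * B₂)⁻¹ * (B₂ᴴ * mconj P * A₂))) :
    (∀ x : ℕ → Fin n → ℂ,
        (∀ k : ℕ, x (k + 1) = mconj (A₂ + B₂ * K) *ᵥ star (x k)) →
        Tendsto x atTop (𝓝 0)) ∧
    ∀ x₀ : Fin n → ℂ,
      (∀ u : ℕ → Fin m → ℂ,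
          ENNReal.ofReal (star x₀ ⬝ᵥ (P *ᵥ x₀)).re ≤ cost Q R (atraj A₂ B₂ x₀ u) u) ∧
      (∀ u : ℕ → Fin m → ℂ, (∀ k : ℕ, u k = K *ᵥ atraj A₂ B₂ x₀ u k) →
          cost Q R (atraj A₂ B₂ x₀ u) u = ENNReal.ofReal (star x₀ ⬝ᵥ (P *ᵥ x₀)).re) := by
  refine ⟨fun x hx => ?_, fun x₀ => ⟨heq.ofReal_le_cost hQ hR hP hK x₀, fun u hu =>
    (heq.cost_le_of_feedback hQ.posSemidef hR hP hK x₀ u hu).antisymm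
      (heq.ofReal_le_cost hQ hR hP hK x₀ u)⟩⟩
  have hxtraj := eq_atraj_of_closedLoop A₂ B₂ K hx
  have hfinite := heq.cost_le_of_feedback hQ.posSemidef hR hP hK (x 0) (fun j => K *ᵥ x j)
    fun k => by rw [← hxtraj k]
  exact (tendsto_zero_of_cost_ne_top hQ hR.posSemidef
    (ne_top_of_le_ne_top ENNReal.ofReal_ne_top hfinite)).congr fun k => (hxtraj k).symm
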